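/- arXiv:1104.3386 — 7 statements merged into one kernel-verified Lean document; each statement's English description precedes it below -/
import Mathlib

section
/- Let (u₁, u₂, u₃, u₄) and (v₁, v₂, v₃, v₄) be two orthonormal bases of ℝ⁴ (with its standard inner product) such that det(u₁,u₂,u₃,u₄) > 0 and det(v₁,v₂,v₃,v₄) > 0 (positive orthonormal frames). Then det(u₁, u₂, v₁, v₂) = det(u₃, u₄, v₃, v₄). -/
/-!
Identify `Λ²ℝ⁴` with `ℝ⁶` via Plücker coordinates. Laplace expansion along the first two columns
reads `det(a, b, c, d) = ⟨a ∧ b, ⋆(c ∧ d)⟩`, where the Hodge star `⋆` is a self-adjoint involution.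
For a positive orthonormal frame, `a ∧ b` and `⋆(c ∧ d)` are unit vectors (Binet–Cauchy) whose
inner product is `det(a, b, c, d) = 1`, so they coincide. Hence `u₁ ∧ u₂ = ⋆(u₃ ∧ u₄)` and
`v₁ ∧ v₂ = ⋆(v₃ ∧ v₄)`, and
`det(u₁, u₂, v₁, v₂) = ⟨⋆(u₃ ∧ u₄), v₃ ∧ v₄⟩ = ⟨u₃ ∧ u₄, ⋆(v₃ ∧ v₄)⟩ = det(u₃, u₄, v₃, v₄)`.
-/

/-- The determinant of the 4×4 real matrix whose columns are `w1, w2, w3, w4`. -/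
noncomputable def det4 (w1 w2 w3 w4 : Fin 4 → ℝ) : ℝ :=
  Matrix.det (Matrix.of fun i j => ![w1, w2, w3, w4] j i)

open Matrix

/-- Coordinates of `a ∧ b` in the basis `e₀₁, e₀₂, e₀₃, e₁₂, e₁₃, e₂₃` of `Λ²ℝ⁴`. -/
def wedge (a b : Fin 4 → ℝ) : Fin 6 → ℝ :=
  ![a 0 * b 1 - a 1 * b 0, a 0 * b 2 - a 2 * b 0, a 0 * b 3 - a 3 * b 0,
    a 1 * b 2 - a 2 * b 1, a 1 * b 3 - a 3 * b 1, a 2 * b 3 - a 3 * b 2]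

/-- The Hodge star of `Λ²ℝ⁴` in the basis of `wedge`: `e_{ij} ↦ sign(ijkl) e_{kl}`. -/
def hodgeStar (p : Fin 6 → ℝ) : Fin 6 → ℝ :=
  ![p 5, -p 4, p 3, p 2, -p 1, p 0]

@[simp]
lemma hodgeStar_hodgeStar (p : Fin 6 → ℝ) : hodgeStar (hodgeStar p) = p := by
  ext i
  fin_cases i <;> simp [hodgeStar]

lemma hodgeStar_dotProduct (p q : Fin 6 → ℝ) : hodgeStar p ⬝ᵥ q = p ⬝ᵥ hodgeStar q := by
  simp only [hodgeStar, dotProduct, Fin.sum_univ_six, cons_val]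
  ring

lemma det4_eq_wedge_dotProduct_hodgeStar_wedge (a b c d : Fin 4 → ℝ) :
    det4 a b c d = wedge a b ⬝ᵥ hodgeStar (wedge c d) := by
  rw [det4, det_succ_column_zero]
  simp only [Fin.sum_univ_four, det_fin_three, submatrix_apply, of_apply, Fin.succAbove,
    Fin.reduceCastSucc, Fin.reduceSucc, Fin.reduceLT, ↓reduceIte, Fin.coe_ofNat_eq_mod,
    Nat.reduceAdd, Fin.isValue, cons_val, dotProduct, Fin.sum_univ_six, wedge, hodgeStar]
  ring

lemma wedge_dotProduct_wedge (a b c d : Fin 4 → ℝ) :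
    wedge a b ⬝ᵥ wedge c d = (a ⬝ᵥ c) * (b ⬝ᵥ d) - (a ⬝ᵥ d) * (b ⬝ᵥ c) := by
  simp only [wedge, dotProduct, Fin.sum_univ_six, Fin.sum_univ_four, cons_val]
  ring

lemma det_eq_one_of_transpose_mul_self {n : Type*} [Fintype n] [DecidableEq n]
    {M : Matrix n n ℝ} (hM : Mᵀ * M = 1) (hpos : 0 < M.det) : M.det = 1 := by
  have hsq : M.det * M.det = 1 := by
    simpa only [det_mul, det_transpose, det_one] using congrArg det hM
  nlinarith

lemma det4_eq_one_of_orthonormal (a b c d : Fin 4 → ℝ)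
    (h : ∀ i j : Fin 4, ![a, b, c, d] i ⬝ᵥ ![a, b, c, d] j = if i = j then 1 else 0)
    (hpos : 0 < det4 a b c d) : det4 a b c d = 1 := by
  refine det_eq_one_of_transpose_mul_self ?_ hpos
  ext i j
  simpa [mul_apply, dotProduct, one_apply] using h i j

lemma wedge_eq_hodgeStar_wedge_of_orthonormal (a b c d : Fin 4 → ℝ)
    (h : ∀ i j : Fin 4, ![a, b, c, d] i ⬝ᵥ ![a, b, c, d] j = if i = j then 1 else 0)
    (hpos : 0 < det4 a b c d) : wedge a b = hodgeStar (wedge c d) := by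
  obtain ⟨haa, hbb, hab, hcc, hdd, hcd⟩ : a ⬝ᵥ a = 1 ∧ b ⬝ᵥ b = 1 ∧ a ⬝ᵥ b = 0 ∧
      c ⬝ᵥ c = 1 ∧ d ⬝ᵥ d = 1 ∧ c ⬝ᵥ d = 0 :=
    ⟨by simpa using h 0 0, by simpa using h 1 1, by simpa using h 0 1,
      by simpa using h 2 2, by simpa using h 3 3, by simpa using h 2 3⟩
  set x := wedge a b
  set y := hodgeStar (wedge c d)
  have hxx : x ⬝ᵥ x = 1 := by simp [x, wedge_dotProduct_wedge, haa, hbb, hab]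
  have hyy : y ⬝ᵥ y = 1 := by
    simp [y, hodgeStar_dotProduct, wedge_dotProduct_wedge, hcc, hdd, hcd]
  have hxy : x ⬝ᵥ y = 1 := by
    rw [← det4_eq_wedge_dotProduct_hodgeStar_wedge, det4_eq_one_of_orthonormal a b c d h hpos]
  have hdiff : (x - y) ⬝ᵥ (x - y) = 0 := by
    rw [sub_dotProduct, dotProduct_sub, dotProduct_sub, dotProduct_comm y x, hxx, hyy, hxy]
    norm_num
  exact sub_eq_zero.mp (dotProduct_self_eq_zero.mp hdiff)

/-- If `(u₁,u₂,u₃,u₄)` and `(v₁,v₂,v₃,v₄)` are positive orthonormal frames of ℝ⁴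
(with the standard inner product, i.e. the dot product), then
`det(u₁,u₂,v₁,v₂) = det(u₃,u₄,v₃,v₄)`. -/
theorem det4_of_positive_orthonormal_frames
    (u1 u2 u3 u4 v1 v2 v3 v4 : Fin 4 → ℝ)
    (hu : ∀ i j : Fin 4,
      dotProduct (![u1, u2, u3, u4] i) (![u1, u2, u3, u4] j)
        = if i = j then 1 else 0)
    (hv : ∀ i j : Fin 4,
      dotProduct (![v1, v2, v3, v4] i) (![v1, v2, v3, v4] j)
        = if i = j then 1 else 0)
    (hupos : 0 < det4 u1 u2 u3 u4)
    (hvpos : 0 < det4 v1 v2 v3 v4) :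
    det4 u1 u2 v1 v2 = det4 u3 u4 v3 v4 := by
  rw [det4_eq_wedge_dotProduct_hodgeStar_wedge, det4_eq_wedge_dotProduct_hodgeStar_wedge,
    wedge_eq_hodgeStar_wedge_of_orthonormal u1 u2 u3 u4 hu hupos,
    wedge_eq_hodgeStar_wedge_of_orthonormal v1 v2 v3 v4 hv hvpos, hodgeStar_hodgeStar,
    hodgeStar_dotProduct]
end

section
/- Let a₁, a₂, b₁, b₂ ∈ ℝ⁴ be such that (a₁, a₂, b₁, b₂) is linearly independent. Let (u₁, u₂) be a basis of the orthogonal complement of span{a₁, a₂} with det(u₁, u₂, a₁, a₂) > 0, and let (v₁, v₂) be a basis of the orthogonal complement of span{b₁, b₂} with det(v₁, v₂, b₁, b₂) > 0. Then det(u₁, u₂, v₁, v₂) · det(a₁, a₂, b₁, b₂) > 0; in particular det(u₁, u₂, v₁, v₂) and det(a₁, a₂, b₁, b₂) have the same sign. (This is the linear-algebraic content of Theorem 1: at a transverse intersection point P of two mixed curves C: f = 0 and C': g = 0, taking a₁ = grad f_ℝ(P), a₂ = grad f_I(P), b₁ = grad g_ℝ(P), b₂ = grad g_I(P), the local topological intersection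 number I_top(C,C';P), computed from positively oriented tangent frames (u₁,u₂) of C and (v₁,v₂) of C', equals Sign(grad f_ℝ(P), grad f_I(P), grad g_ℝ(P), grad g_I(P)).) -/
/-!
Write `x = det(u₁,u₂,a₁,a₂)`, `y = det(v₁,v₂,b₁,b₂)`, `d = det(u₁,u₂,v₁,v₂)` and
`D = det(a₁,a₂,b₁,b₂)`. A product of two determinants is the determinant of the matrix of
pairings of their columns, and the orthogonality relations make that matrix block triangular.
This gives `x D = P G_a`, `y D = Q G_b` and `d D = P Q`, where `G_a`, `G_b` are the Gram
determinants of `(a₁,a₂)`, `(b₁,b₂)` and `P`, `Q` are the pairing determinants of `(u, b)` and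
`(v, a)`. Hence `G_a G_b (d D) = x y D² > 0`, and `G_a, G_b ≥ 0` by Cauchy–Schwarz.
-/

open Matrix

theorem Matrix.det_eq_mul_of_castAdd_natAdd_eq_zero {R : Type*} [CommRing R] {m n : ℕ}
    (M : Matrix (Fin (m + n)) (Fin (m + n)) R)
    (h : ∀ i j, M (Fin.castAdd n i) (Fin.natAdd m j) = 0) :
    M.det = (M.submatrix (Fin.castAdd n) (Fin.castAdd n)).det *
      (M.submatrix (Fin.natAdd m) (Fin.natAdd m)).det := by
  have hB : (reindex finSumFinEquiv.symm finSumFinEquiv.symm M).toBlocks₁₂ = 0 := by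
    ext i j
    exact h i j
  rw [← det_reindex_self finSumFinEquiv.symm M, ← fromBlocks_toBlocks (reindex _ _ M), hB,
    det_fromBlocks_zero₁₂]
  rfl

def pairingDet {ι : Type*} [Fintype ι] (x1 x2 y1 y2 : ι → ℝ) : ℝ :=
  x1 ⬝ᵥ y1 * (x2 ⬝ᵥ y2) - x1 ⬝ᵥ y2 * (x2 ⬝ᵥ y1)

theorem pairingDet_self_nonneg {ι : Type*} [Fintype ι] (x1 x2 : ι → ℝ) :
    0 ≤ pairingDet x1 x2 x1 x2 := by
  have cauchy_schwarz := Finset.sum_mul_sq_le_sq_mul_sq Finset.univ x1 x2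
  rw [pairingDet, dotProduct_comm x2 x1]
  simp only [dotProduct, pow_two] at cauchy_schwarz ⊢
  linarith

theorem det4_eq_det_rows (w1 w2 w3 w4 : Fin 4 → ℝ) :
    det4 w1 w2 w3 w4 = (of ![w1, w2, w3, w4]).det :=
  det_transpose _

theorem det4_ne_zero {w1 w2 w3 w4 : Fin 4 → ℝ} (h : LinearIndependent ℝ ![w1, w2, w3, w4]) :
    det4 w1 w2 w3 w4 ≠ 0 := by
  rw [det4_eq_det_rows]
  exact ((isUnit_iff_isUnit_det _).mp (linearIndependent_rows_iff_isUnit.mp h)).ne_zero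

theorem det4_swap_pairs (w1 w2 w3 w4 : Fin 4 → ℝ) : det4 w3 w4 w1 w2 = det4 w1 w2 w3 w4 := by
  have hsign : Equiv.Perm.sign (Equiv.addRight (2 : Fin 4)) = 1 := by decide
  have hrows : of ![w3, w4, w1, w2] = (of ![w1, w2, w3, w4]).submatrix (Equiv.addRight 2) id := by
    ext i : 1
    fin_cases i <;> rfl
  rw [det4_eq_det_rows, det4_eq_det_rows, hrows, det_permute, hsign]
  simp

theorem det4_mul_det4 (p1 p2 p3 p4 q1 q2 q3 q4 : Fin 4 → ℝ) :
    det4 p1 p2 p3 p4 * det4 q1 q2 q3 q4 =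
      (of fun i j => ![p1, p2, p3, p4] i ⬝ᵥ ![q1, q2, q3, q4] j).det := by
  rw [det4_eq_det_rows, det4_eq_det_rows, ← det_transpose (of ![q1, q2, q3, q4]), ← det_mul]
  rfl

theorem det4_mul_det4_of_orthogonal {p1 p2 p3 p4 q1 q2 q3 q4 : Fin 4 → ℝ}
    (h13 : p1 ⬝ᵥ q3 = 0) (h14 : p1 ⬝ᵥ q4 = 0) (h23 : p2 ⬝ᵥ q3 = 0) (h24 : p2 ⬝ᵥ q4 = 0) :
    det4 p1 p2 p3 p4 * det4 q1 q2 q3 q4 = pairingDet p1 p2 q1 q2 * pairingDet p3 p4 q3 q4 := by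
  rw [det4_mul_det4, det_eq_mul_of_castAdd_natAdd_eq_zero (m := 2) (n := 2)]
  · simp [det_fin_two, pairingDet]
  · intro i j
    fin_cases i <;> fin_cases j <;> assumption

theorem sign_det_tangent_frames_eq_sign_det_gradients_general
    (a1 a2 b1 b2 u1 u2 v1 v2 : Fin 4 → ℝ)
    (hab : LinearIndependent ℝ ![a1, a2, b1, b2])
    (hu1a1 : dotProduct u1 a1 = 0) (hu1a2 : dotProduct u1 a2 = 0)
    (hu2a1 : dotProduct u2 a1 = 0) (hu2a2 : dotProduct u2 a2 = 0)
    (hu_pos : 0 < det4 u1 u2 a1 a2)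
    (hv1b1 : dotProduct v1 b1 = 0) (hv1b2 : dotProduct v1 b2 = 0)
    (hv2b1 : dotProduct v2 b1 = 0) (hv2b2 : dotProduct v2 b2 = 0)
    (hv_pos : 0 < det4 v1 v2 b1 b2) :
    0 < det4 u1 u2 v1 v2 * det4 a1 a2 b1 b2 := by
  have hD := det4_ne_zero hab
  have hx := det4_mul_det4_of_orthogonal (p3 := a1) (p4 := a2) (q1 := b1) (q2 := b2)
    hu1a1 hu1a2 hu2a1 hu2a2
  have hy := det4_mul_det4_of_orthogonal (p3 := b1) (p4 := b2) (q1 := a1) (q2 := a2)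
    hv1b1 hv1b2 hv2b1 hv2b2
  have hd := det4_mul_det4_of_orthogonal (p3 := v1) (p4 := v2) (q1 := b1) (q2 := b2)
    hu1a1 hu1a2 hu2a1 hu2a2
  rw [det4_swap_pairs a1 a2 b1 b2] at hx hd
  have key : pairingDet a1 a2 a1 a2 * pairingDet b1 b2 b1 b2 *
      (det4 u1 u2 v1 v2 * det4 a1 a2 b1 b2) =
      det4 u1 u2 a1 a2 * det4 v1 v2 b1 b2 * (det4 a1 a2 b1 b2 * det4 a1 a2 b1 b2) := by
    rw [hd]
    linear_combination (-(det4 v1 v2 b1 b2 * det4 a1 a2 b1 b2)) * hx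
      - pairingDet u1 u2 b1 b2 * pairingDet a1 a2 a1 a2 * hy
  refine pos_of_mul_pos_right ?_
    (mul_nonneg (pairingDet_self_nonneg a1 a2) (pairingDet_self_nonneg b1 b2))
  rw [key]
  exact mul_pos (mul_pos hu_pos hv_pos) (mul_self_pos.mpr hD)

/-- Theorem 1 (linear-algebraic content): let `a₁,a₂,b₁,b₂` be linearly independent
vectors of ℝ⁴ (with the standard dot product).  If `(u₁,u₂)` is a basis of the
orthogonal complement of `span{a₁,a₂}` with `det(u₁,u₂,a₁,a₂) > 0`, and `(v₁,v₂)`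
is a basis of the orthogonal complement of `span{b₁,b₂}` with `det(v₁,v₂,b₁,b₂) > 0`,
then `det(u₁,u₂,v₁,v₂) · det(a₁,a₂,b₁,b₂) > 0`.

Here "basis of the orthogonal complement of `span{a₁,a₂}`" is expressed (equivalently,
since `a₁,a₂` are linearly independent so the complement is 2-dimensional) by:
`u₁,u₂` are linearly independent and each is orthogonal to both `a₁` and `a₂`. -/
theorem sign_det_tangent_frames_eq_sign_det_gradients
    (a1 a2 b1 b2 u1 u2 v1 v2 : Fin 4 → ℝ)
    (hab : LinearIndependent ℝ ![a1, a2, b1, b2])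
    (hu_indep : LinearIndependent ℝ ![u1, u2])
    (hu1a1 : dotProduct u1 a1 = 0) (hu1a2 : dotProduct u1 a2 = 0)
    (hu2a1 : dotProduct u2 a1 = 0) (hu2a2 : dotProduct u2 a2 = 0)
    (hu_pos : 0 < det4 u1 u2 a1 a2)
    (hv_indep : LinearIndependent ℝ ![v1, v2])
    (hv1b1 : dotProduct v1 b1 = 0) (hv1b2 : dotProduct v1 b2 = 0)
    (hv2b1 : dotProduct v2 b1 = 0) (hv2b2 : dotProduct v2 b2 = 0)
    (hv_pos : 0 < det4 v1 v2 b1 b2) :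
    0 < det4 u1 u2 v1 v2 * det4 a1 a2 b1 b2 :=
  sign_det_tangent_frames_eq_sign_det_gradients_general a1 a2 b1 b2 u1 u2 v1 v2 hab hu1a1 hu1a2
    hu2a1 hu2a2 hu_pos hv1b1 hv1b2 hv2b1 hv2b2 hv_pos
end

section
/- Let n ≥ 2 be an integer and let α ∈ ℂ be a nonzero root of f(u, ū) = uⁿ + u + ū, i.e. αⁿ + α + ᾱ = 0 and α ≠ 0. Then |n·αⁿ⁻¹ + 1| > 1. (Since ∂f/∂z(α,ᾱ) = n·αⁿ⁻¹ + 1 and ∂f/∂z̄(α,ᾱ) = 1, this says every nonzero root of uⁿ + u + ū = 0 is a positive simple root.) -/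
/-! Writing `a = Re α`, the root equation says `αⁿ = -2a`, so
`(n αⁿ⁻¹ + 1) α = n αⁿ + α = α - 2na` differs from `α` only in its real part,
which is multiplied by `1 - 2n`. As `a ≠ 0` (otherwise `αⁿ = 0`) and `|1 - 2n| > 1`,
this gives `|n αⁿ⁻¹ + 1| |α| > |α|`. -/

open ComplexConjugate

theorem Complex.norm_lt_norm_add_ofReal {z : ℂ} {t : ℝ} (h : |z.re| < |z.re + t|) :
    ‖z‖ < ‖z + t‖ := by
  have hsq : z.re ^ 2 < (z.re + t) ^ 2 := sq_lt_sq.mpr h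
  rw [← sq_lt_sq₀ (norm_nonneg _) (norm_nonneg _), Complex.sq_norm, Complex.sq_norm,
    Complex.normSq_apply, Complex.normSq_apply]
  simp only [Complex.add_re, Complex.ofReal_re, Complex.add_im, Complex.ofReal_im, add_zero]
  nlinarith

section RootOfPowAddAddConj

variable {n : ℕ} {α : ℂ}

theorem pow_eq_neg_two_re_of_pow_add_add_conj_eq_zero (hroot : α ^ n + α + conj α = 0) :
    α ^ n = ((-2 * α.re : ℝ) : ℂ) := by
  have hconj := Complex.add_conj α
  push_cast at hconj ⊢
  linear_combination hroot - hconj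

theorem re_ne_zero_of_pow_add_add_conj_eq_zero (hn : n ≠ 0) (hα : α ≠ 0)
    (hroot : α ^ n + α + conj α = 0) : α.re ≠ 0 := by
  intro hre
  apply hα
  rw [← pow_eq_zero_iff hn, pow_eq_neg_two_re_of_pow_add_add_conj_eq_zero hroot, hre]
  simp

end RootOfPowAddAddConj

/-- Every nonzero root `α` of `f(u, ū) = uⁿ + u + ū` (for `n ≥ 2`) satisfies
`|n·αⁿ⁻¹ + 1| > 1`, i.e. it is a positive simple root
(`∂f/∂z(α,ᾱ) = n αⁿ⁻¹ + 1` has modulus bigger than `∂f/∂z̄(α,ᾱ) = 1`). -/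
theorem nonzero_root_is_positive_simple (n : ℕ) (hn : 2 ≤ n) (α : ℂ)
    (hα : α ≠ 0) (hroot : α ^ n + α + (starRingEnd ℂ) α = 0) :
    1 < ‖(n : ℂ) * α ^ (n - 1) + 1‖ := by
  have ha : α.re ≠ 0 := re_ne_zero_of_pow_add_add_conj_eq_zero (by omega) hα hroot
  have hfactor : ((n : ℂ) * α ^ (n - 1) + 1) * α = α + ((-2 * n * α.re : ℝ) : ℂ) := by
    rw [add_mul, mul_assoc, ← pow_succ, Nat.sub_add_cancel (by omega),
      pow_eq_neg_two_re_of_pow_add_add_conj_eq_zero hroot]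
    push_cast
    ring
  have hscale : 1 < |1 - 2 * (n : ℝ)| := by
    have : (2 : ℝ) ≤ n := by exact_mod_cast hn
    rw [abs_of_neg (by linarith)]
    linarith
  have hgrow : ‖α‖ < ‖α + ((-2 * n * α.re : ℝ) : ℂ)‖ := by
    apply Complex.norm_lt_norm_add_ofReal
    rw [show α.re + -2 * n * α.re = (1 - 2 * n) * α.re by ring, abs_mul]
    exact lt_mul_of_one_lt_left (abs_pos.mpr ha) hscale
  rw [← hfactor, norm_mul] at hgrow
  exact (lt_mul_iff_one_lt_left (norm_pos_iff.mpr hα)).mp hgrow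
end

section
/- Let n ≥ 2 be an integer. The set of nonzero complex numbers α satisfying αⁿ + α + ᾱ = 0 is finite, and its cardinality β is: β = n − 1 if n is even; β = n + 1 if n ≡ 3 (mod 4); β = n − 1 if n ≡ 1 (mod 4). -/
/-!
Write a nonzero root as `α = r ζᵏ` with `r > 0`, `ζ = exp (π i / n)` and `k < 2n`: this is possible
because `αⁿ = -2 Re α` is real, so `α / |α|` is a `2n`-th root of unity. In these coordinates the
equation reads `rⁿ⁻¹ = -2 (-1)ᵏ cos (kπ/n)`, so the nonzero roots correspond bijectively to the
`k < 2n` with `(-1)ᵏ cos (kπ/n) < 0`. By the sign of `cos (kπ/n)` these are the odd `k` with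
`2k < n` or `3n < 2k` and the even `k` with `n < 2k < 3n`, and counting them gives the answer.
-/

open Finset Real ComplexConjugate

lemma Real.cos_mul_pi_neg_iff {t : ℝ} (h0 : 0 ≤ t) (h2 : t < 2) :
    cos (t * π) < 0 ↔ 1 / 2 < t ∧ t < 3 / 2 := by
  have := pi_pos
  refine ⟨fun h => ?_, fun h => cos_neg_of_pi_div_two_lt_of_lt (by nlinarith) (by nlinarith)⟩
  by_contra! ht
  by_cases ht1 : t ≤ 1 / 2
  · exact h.not_ge (cos_nonneg_of_neg_pi_div_two_le_of_le (by nlinarith) (by nlinarith))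
  · rw [← cos_sub_two_pi] at h
    have := ht (by linarith)
    exact h.not_ge (cos_nonneg_of_neg_pi_div_two_le_of_le (by nlinarith) (by nlinarith))

lemma Real.cos_mul_pi_pos_iff {t : ℝ} (h0 : 0 ≤ t) (h2 : t < 2) :
    0 < cos (t * π) ↔ t < 1 / 2 ∨ 3 / 2 < t := by
  have := pi_pos
  refine ⟨fun h => ?_, fun h => ?_⟩
  · by_contra! ht
    exact h.not_ge (cos_nonpos_of_pi_div_two_le_of_le (by nlinarith) (by nlinarith))
  · rcases h with ht | ht
    · exact cos_pos_of_mem_Ioo ⟨by nlinarith, by nlinarith⟩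
    · rw [← cos_sub_two_pi]
      exact cos_pos_of_mem_Ioo ⟨by nlinarith, by nlinarith⟩

section angles

variable {n k : ℕ}

lemma cos_nat_mul_pi_div_neg_iff (hk : k < 2 * n) :
    cos (k * π / n) < 0 ↔ n < 2 * k ∧ 2 * k < 3 * n := by
  have hn : (0 : ℝ) < n := by exact_mod_cast (by omega : 0 < n)
  have hkn : (k : ℝ) / n < 2 := by rw [div_lt_iff₀ hn]; exact_mod_cast hk
  rw [mul_div_right_comm, cos_mul_pi_neg_iff (by positivity) hkn, div_lt_div_iff₀ two_pos hn,
    div_lt_div_iff₀ hn two_pos]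
  norm_cast
  omega

lemma cos_nat_mul_pi_div_pos_iff (hk : k < 2 * n) :
    0 < cos (k * π / n) ↔ 2 * k < n ∨ 3 * n < 2 * k := by
  have hn : (0 : ℝ) < n := by exact_mod_cast (by omega : 0 < n)
  have hkn : (k : ℝ) / n < 2 := by rw [div_lt_iff₀ hn]; exact_mod_cast hk
  rw [mul_div_right_comm, cos_mul_pi_pos_iff (by positivity) hkn, div_lt_div_iff₀ two_pos hn,
    div_lt_div_iff₀ hn two_pos]
  norm_cast
  omega

noncomputable def signedCos (n k : ℕ) : ℝ := (-1) ^ k * cos (k * π / n)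

lemma signedCos_neg_iff (hk : k < 2 * n) :
    signedCos n k < 0 ↔
      k % 2 = 1 ∧ 2 * k < n ∨ k % 2 = 0 ∧ n < 2 * k ∧ 2 * k < 3 * n ∨
        k % 2 = 1 ∧ 3 * n < 2 * k := by
  rcases Nat.even_or_odd k with hk2 | hk2
  · rw [signedCos, hk2.neg_one_pow, one_mul, cos_nat_mul_pi_div_neg_iff hk]
    have := Nat.even_iff.1 hk2
    omega
  · rw [signedCos, hk2.neg_one_pow, neg_one_mul, neg_lt_zero, cos_nat_mul_pi_div_pos_iff hk]
    have := Nat.odd_iff.1 hk2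
    omega

end angles

noncomputable def zeta (n : ℕ) : ℂ := Complex.exp (π * Complex.I / n)

lemma isPrimitiveRoot_zeta {n : ℕ} (hn : n ≠ 0) : IsPrimitiveRoot (zeta n) (2 * n) := by
  convert Complex.isPrimitiveRoot_exp (2 * n) (by positivity) using 2
  rw [zeta]
  push_cast
  field_simp

lemma zeta_pow_eq_exp (n k : ℕ) : zeta n ^ k = Complex.exp ((k * π / n : ℝ) * Complex.I) := by
  rw [zeta, ← Complex.exp_nat_mul]
  push_cast
  ring_nf

lemma re_zeta_pow (n k : ℕ) : (zeta n ^ k).re = cos (k * π / n) := by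
  rw [zeta_pow_eq_exp, Complex.exp_ofReal_mul_I_re]

lemma zeta_pow_pow {n : ℕ} (hn : n ≠ 0) (k : ℕ) : (zeta n ^ k) ^ n = (-1) ^ k := by
  rw [← pow_mul, mul_comm, pow_mul, zeta, ← Complex.exp_nat_mul,
    mul_div_cancel₀ _ (by exact_mod_cast hn), Complex.exp_pi_mul_I]

lemma pow_add_add_conj_real_mul_zeta_pow {n : ℕ} (hn : n ≠ 0) (k : ℕ) (r : ℝ) :
    (r * zeta n ^ k) ^ n + r * zeta n ^ k + conj (r * zeta n ^ k) =
      ((r ^ n * (-1) ^ k + 2 * r * cos (k * π / n) : ℝ) : ℂ) := by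
  rw [add_assoc, Complex.add_conj, Complex.re_ofReal_mul, re_zeta_pow, mul_pow, zeta_pow_pow hn]
  push_cast
  ring

lemma isRoot_real_mul_zeta_pow_iff {n k : ℕ} (hn : n ≠ 0) {r : ℝ} (hr : 0 < r) :
    (r * zeta n ^ k) ^ n + r * zeta n ^ k + conj (r * zeta n ^ k) = 0 ↔
      r ^ (n - 1) = -2 * signedCos n k := by
  have hpow : r ^ n = r * r ^ (n - 1) := by rw [← pow_succ', Nat.sub_add_cancel (by omega)]
  have hsq : ((-1 : ℝ) ^ k) ^ 2 = 1 := by rw [← pow_mul, mul_comm, pow_mul, neg_one_sq, one_pow]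
  rw [pow_add_add_conj_real_mul_zeta_pow hn, Complex.ofReal_eq_zero, signedCos, hpow]
  constructor <;> intro h
  · have h' : r * (r ^ (n - 1) * (-1) ^ k + 2 * cos (k * π / n)) = 0 := by linear_combination h
    linear_combination (-1) ^ k * (mul_eq_zero.1 h').resolve_left hr.ne' - r ^ (n - 1) * hsq
  · linear_combination r * (-1) ^ k * h - 2 * r * cos (k * π / n) * hsq

lemma card_filter_Ico_mod_two {a b r : ℕ} (hr : r < 2) (hab : a ≤ b) :
    #{k ∈ Ico a b | k % 2 = r} = (b + 1 - r) / 2 - (a + 1 - r) / 2 := by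
  induction b, hab using Nat.le_induction with
  | base => simp
  | succ b hab ih =>
    rw [Nat.Ico_succ_right_eq_insert_Ico hab, filter_insert]
    split_ifs
    · rw [card_insert_of_notMem (by simp), ih]
      omega
    · rw [ih]
      omega

lemma card_filter_range_signPattern {n : ℕ} (hn : 0 < n) :
    #{k ∈ range (2 * n) | k % 2 = 1 ∧ 2 * k < n ∨ k % 2 = 0 ∧ n < 2 * k ∧ 2 * k < 3 * n ∨
      k % 2 = 1 ∧ 3 * n < 2 * k} = if n % 4 = 3 then n + 1 else n - 1 := by
  have hA : {k ∈ range (2 * n) | k % 2 = 1 ∧ 2 * k < n} =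
      {k ∈ Ico 0 ((n + 1) / 2) | k % 2 = 1} := by
    ext k; simp only [mem_filter, mem_range, mem_Ico]; omega
  have hB : {k ∈ range (2 * n) | k % 2 = 0 ∧ n < 2 * k ∧ 2 * k < 3 * n} =
      {k ∈ Ico (n / 2 + 1) ((3 * n + 1) / 2) | k % 2 = 0} := by
    ext k; simp only [mem_filter, mem_range, mem_Ico]; omega
  have hC : {k ∈ range (2 * n) | k % 2 = 1 ∧ 3 * n < 2 * k} =
      {k ∈ Ico (3 * n / 2 + 1) (2 * n) | k % 2 = 1} := by
    ext k; simp only [mem_filter, mem_range, mem_Ico]; omega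
  rw [filter_or, filter_or,
    card_union_of_disjoint (disjoint_union_right.2 ⟨disjoint_filter.2 fun k _ h h' => by omega,
      disjoint_filter.2 fun k _ h h' => by omega⟩),
    card_union_of_disjoint (disjoint_filter.2 fun k _ h h' => by omega), hA, hB, hC,
    card_filter_Ico_mod_two (by omega) (by omega), card_filter_Ico_mod_two (by omega) (by omega),
    card_filter_Ico_mod_two (by omega) (by omega)]
  obtain ⟨j, rfl | rfl | rfl | rfl⟩ :
      ∃ j, n = 4 * j ∨ n = 4 * j + 1 ∨ n = 4 * j + 2 ∨ n = 4 * j + 3 := ⟨n / 4, by omega⟩ <;>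
    split_ifs <;> omega

noncomputable def rootIndices (n : ℕ) : Finset ℕ := {k ∈ range (2 * n) | signedCos n k < 0}

lemma card_rootIndices {n : ℕ} (hn : 0 < n) :
    #(rootIndices n) = if n % 4 = 3 then n + 1 else n - 1 := by
  rw [rootIndices, ← card_filter_range_signPattern hn]
  congr 1
  exact filter_congr fun k hk => signedCos_neg_iff (mem_range.1 hk)

noncomputable def rootModulus (n k : ℕ) : ℝ := (-2 * signedCos n k) ^ ((n - 1 : ℕ) : ℝ)⁻¹

noncomputable def rootOf (n k : ℕ) : ℂ := rootModulus n k * zeta n ^ k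

def nonzeroRoots (n : ℕ) : Set ℂ := {α | α ≠ 0 ∧ α ^ n + α + conj α = 0}

section roots

variable {n : ℕ}

lemma rootModulus_pos {k : ℕ} (hk : signedCos n k < 0) : 0 < rootModulus n k :=
  rpow_pos_of_pos (by linarith) _

lemma rootOf_mem_nonzeroRoots (hn : 2 ≤ n) {k : ℕ} (hk : signedCos n k < 0) :
    rootOf n k ∈ nonzeroRoots n := by
  have hr := rootModulus_pos hk
  refine ⟨mul_ne_zero (Complex.ofReal_ne_zero.2 hr.ne') (pow_ne_zero _ (Complex.exp_ne_zero _)),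
    (isRoot_real_mul_zeta_pow_iff (by omega) hr).2 (rpow_inv_natCast_pow (by linarith) (by omega))⟩

lemma rootOf_div_norm (hn : n ≠ 0) {k : ℕ} (hk : signedCos n k < 0) :
    rootOf n k / ‖rootOf n k‖ = zeta n ^ k := by
  have hr := rootModulus_pos hk
  rw [rootOf, norm_mul, norm_pow, (isPrimitiveRoot_zeta hn).norm'_eq_one (by omega), one_pow,
    mul_one, Complex.norm_real, Real.norm_of_nonneg hr.le,
    mul_div_cancel_left₀ _ (Complex.ofReal_ne_zero.2 hr.ne')]

lemma rootOf_injOn (hn : n ≠ 0) : Set.InjOn (rootOf n) (rootIndices n) := by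
  intro k hk k' hk' h
  simp only [rootIndices, mem_coe, mem_filter, mem_range] at hk hk'
  refine (isPrimitiveRoot_zeta hn).pow_inj hk.1 hk'.1 ?_
  rw [← rootOf_div_norm hn hk.2, ← rootOf_div_norm hn hk'.2, h]

lemma exists_rootOf_eq (hn : 2 ≤ n) {α : ℂ} (hα : α ∈ nonzeroRoots n) :
    ∃ k ∈ rootIndices n, rootOf n k = α := by
  obtain ⟨hα0, hroot⟩ := hα
  set r := ‖α‖
  have hr : 0 < r := norm_pos_iff.2 hα0
  have hreal : α ^ n = ((-(2 * α.re) : ℝ) : ℂ) := by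
    rw [Complex.ofReal_neg, ← Complex.add_conj]
    linear_combination hroot
  have hsq : (-(2 * α.re)) ^ 2 = (r ^ n) ^ 2 := by
    rw [← norm_pow, hreal, Complex.norm_real, Real.norm_eq_abs, sq_abs]
  have hunit : (α / r) ^ (2 * n) = 1 := by
    rw [mul_comm, pow_mul, div_pow, hreal, div_pow, div_eq_one_iff_eq (by simp [hr.ne'])]
    exact_mod_cast hsq
  have : NeZero (2 * n) := ⟨by omega⟩
  obtain ⟨k, hk, hζ⟩ := (isPrimitiveRoot_zeta (by omega)).eq_pow_of_pow_eq_one hunit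
  have hαk : α = r * zeta n ^ k := by
    rw [hζ, mul_div_cancel₀ _ (Complex.ofReal_ne_zero.2 hr.ne')]
  rw [hαk] at hroot
  have hmod := (isRoot_real_mul_zeta_pow_iff (by omega) hr).1 hroot
  have hneg : signedCos n k < 0 := by linarith [pow_pos hr (n - 1)]
  refine ⟨k, mem_filter.2 ⟨mem_range.2 hk, hneg⟩, ?_⟩
  rw [rootOf, rootModulus, ← hmod, pow_rpow_inv_natCast hr.le (by omega), hαk]

lemma nonzeroRoots_eq_image (hn : 2 ≤ n) : nonzeroRoots n = rootOf n '' rootIndices n := by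
  ext α
  refine ⟨fun hα => exists_rootOf_eq hn hα, ?_⟩
  rintro ⟨k, hk, rfl⟩
  exact rootOf_mem_nonzeroRoots hn (mem_filter.1 hk).2

lemma finite_nonzeroRoots (hn : 2 ≤ n) : (nonzeroRoots n).Finite :=
  nonzeroRoots_eq_image hn ▸ (rootIndices n).finite_toSet.image _

lemma ncard_nonzeroRoots (hn : 2 ≤ n) :
    (nonzeroRoots n).ncard = if n % 4 = 3 then n + 1 else n - 1 := by
  rw [nonzeroRoots_eq_image hn, (rootOf_injOn (by omega)).ncard_image, Set.ncard_coe_finset,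
    card_rootIndices (by omega)]

end roots

/-- The number β of nonzero mixed roots of `uⁿ + u + ū = 0` (for `n ≥ 2`):
the root set is finite, and `β = n − 1` if `n` is even, `β = n + 1` if
`n ≡ 3 (mod 4)`, and `β = n − 1` if `n ≡ 1 (mod 4)`. -/
theorem card_nonzero_roots (n : ℕ) (hn : 2 ≤ n) :
    ({α : ℂ | α ≠ 0 ∧ α ^ n + α + (starRingEnd ℂ) α = 0}).Finite ∧
    (Even n →
      ({α : ℂ | α ≠ 0 ∧ α ^ n + α + (starRingEnd ℂ) α = 0}).ncard = n - 1) ∧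
    (n % 4 = 3 →
      ({α : ℂ | α ≠ 0 ∧ α ^ n + α + (starRingEnd ℂ) α = 0}).ncard = n + 1) ∧
    (n % 4 = 1 →
      ({α : ℂ | α ≠ 0 ∧ α ^ n + α + (starRingEnd ℂ) α = 0}).ncard = n - 1) := by
  have hcard := ncard_nonzeroRoots hn
  refine ⟨finite_nonzeroRoots hn,
    fun he => hcard.trans (if_neg ?_), fun h3 => hcard.trans (if_pos h3),
    fun h1 => hcard.trans (if_neg (by omega))⟩
  rw [Nat.even_iff] at he
  omega
end

section
/- Let F : ℂ × ℂ → ℂ be the mixed function F(u₀, u₁) = u₁·ū₀ − u₀ (the local equation of the twisted line at infinity). For every point p = (u₀, u₁) with F(p) = 0, the real Fréchet derivative of F at p (an ℝ-linear map ℂ² → ℂ) fails to be surjective if and only if u₀ = 0 and |u₁| = 1. Hence the mixed singular locus of the curve {F = 0} is exactly the circle {(0, u₁) | |u₁| = 1}. -/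
/-!
At `(a, b)` the real derivative of `F` is `(h, k) ↦ b h̄ + ā k - h`. If `a ≠ 0` the `k`-term alone
already covers `ℂ`. If `a = 0` only `h ↦ b h̄ - h` remains: for `|b| ≠ 1` it is inverted by
`w ↦ -(w + b w̄) / (1 - |b|²)`, while for `|b| = 1` every value `w` satisfies `b̄ w + w̄ = 0`.
-/

open ComplexConjugate ContinuousLinearMap

theorem Complex.surjective_mul_conj_sub_self_iff (b : ℂ) :
    Function.Surjective (fun h : ℂ => b * conj h - h) ↔ ‖b‖ ≠ 1 := by
  constructor
  · intro hsurj hb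
    have hbb : conj b * b = 1 := by
      rw [mul_comm, Complex.mul_conj', hb]; norm_num
    have hrange : ∀ w, conj b * w + conj w = 0 := by
      intro w
      obtain ⟨h, rfl⟩ := hsurj w
      simp only [map_sub, map_mul, Complex.conj_conj]
      linear_combination conj h * hbb
    have h1 := hrange 1
    have hI := hrange Complex.I
    simp only [mul_one, map_one, Complex.conj_I] at h1 hI
    have hb1 : conj b = -1 := by linear_combination h1
    rw [hb1] at hI
    have hI2 : (2 : ℂ) * Complex.I = 0 := by linear_combination -hI
    simp at hI2
  · intro hb w
    have ht : ((1 - ‖b‖ ^ 2 : ℝ) : ℂ) ≠ 0 := by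
      rw [Complex.ofReal_ne_zero, sub_ne_zero, ne_comm, Ne,
        pow_eq_one_iff_of_nonneg (norm_nonneg b) two_ne_zero]
      exact hb
    refine ⟨-(w + b * conj w) / ((1 - ‖b‖ ^ 2 : ℝ) : ℂ), ?_⟩
    simp only [map_div₀, map_neg, map_add, map_mul, Complex.conj_conj, Complex.conj_ofReal]
    push_cast at ht ⊢
    rw [← Complex.mul_conj'] at ht ⊢
    field_simp
    ring

theorem hasFDerivAt_snd_mul_conj_fst_sub_fst (a b : ℂ) :
    HasFDerivAt (fun p : ℂ × ℂ => p.2 * conj p.1 - p.1)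
      (b • ((Complex.conjCLE : ℂ →L[ℝ] ℂ).comp (fst ℝ ℂ ℂ)) + conj a • snd ℝ ℂ ℂ
        - fst ℝ ℂ ℂ) (a, b) := by
  have hconj : HasFDerivAt (fun p : ℂ × ℂ => conj p.1)
      ((Complex.conjCLE : ℂ →L[ℝ] ℂ).comp (fst ℝ ℂ ℂ)) (a, b) :=
    ((Complex.conjCLE : ℂ →L[ℝ] ℂ).comp (fst ℝ ℂ ℂ)).hasFDerivAt
  exact (hasFDerivAt_snd.mul hconj).sub hasFDerivAt_fst

theorem fderiv_snd_mul_conj_fst_sub_fst_apply (a b : ℂ) (v : ℂ × ℂ) :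
    fderiv ℝ (fun p : ℂ × ℂ => p.2 * conj p.1 - p.1) (a, b) v =
      b * conj v.1 + conj a * v.2 - v.1 := by
  simp [(hasFDerivAt_snd_mul_conj_fst_sub_fst a b).fderiv]

theorem surjective_fderiv_snd_mul_conj_fst_sub_fst_iff (a b : ℂ) :
    Function.Surjective (fderiv ℝ (fun p : ℂ × ℂ => p.2 * conj p.1 - p.1) (a, b)) ↔
      a ≠ 0 ∨ ‖b‖ ≠ 1 := by
  have hcoe : ⇑(fderiv ℝ (fun p : ℂ × ℂ => p.2 * conj p.1 - p.1) (a, b)) =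
      fun v => b * conj v.1 + conj a * v.2 - v.1 :=
    funext (fderiv_snd_mul_conj_fst_sub_fst_apply a b)
  rw [hcoe]
  by_cases ha : a = 0
  · subst ha
    simp only [map_zero, zero_mul, add_zero, ne_eq, not_true_eq_false, false_or]
    exact (Function.Surjective.of_comp_iff (fun h => b * conj h - h) Prod.fst_surjective).trans
      (Complex.surjective_mul_conj_sub_self_iff b)
  · refine iff_of_true (fun w => ⟨(0, w / conj a), ?_⟩) (Or.inl ha)
    have : conj a ≠ 0 := by simpa using ha
    simp [mul_div_cancel₀ _ this]

/-- Twisted line: for the mixed function `F(u₀,u₁) = u₁ū₀ − u₀` and any point `p`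
of the curve `{F = 0}`, the real Fréchet derivative of `F` at `p` (an ℝ-linear map
`ℂ² → ℂ`) fails to be surjective exactly when `u₀ = 0` and `|u₁| = 1`.  Hence the
mixed singular locus of `{F = 0}` is the circle `{(0,u₁) | |u₁| = 1}` at infinity. -/
theorem twisted_line_singular_locus
    (F : ℂ × ℂ → ℂ) (hF : F = fun p => p.2 * (starRingEnd ℂ) p.1 - p.1) :
    ∀ p : ℂ × ℂ, F p = 0 →
      (¬ Function.Surjective (fderiv ℝ F p) ↔ (p.1 = 0 ∧ ‖p.2‖ = 1)) := by
  subst hF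
  rintro ⟨a, b⟩ -
  rw [surjective_fderiv_snd_mul_conj_fst_sub_fst_iff]
  tauto
end

section
/- Let c ∈ ℂ, c ≠ 0, p, q ∈ ℕ, and γ₁, …, γ_s ∈ ℂ nonzero with |γⱼ| ≠ 1 and multiplicities νⱼ ∈ ℕ; define g(u) = c·u^p·ū^q·∏ⱼ(u + γⱼ·ū)^{νⱼ} and d = p + q + Σⱼ νⱼ, and assume d ≥ 1. Let k : ℂ → ℂ be any function for which there exists C ≥ 0 with |k(u)| ≤ C·|u|^{d−1} for all u with |u| ≥ 1. Then there exists R > 0 such that g(u) + k(u) ≠ 0 whenever |u| ≥ R. (In particular, an admissible-at-infinity mixed polynomial f = f_{d̄} + k, where f_{d̄} is its admissible top radially homogeneous part and k collects the lower-degree terms, has all of its zeros contained in a bounded disk.) -/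
/-!
By the reverse triangle inequality each factor `u + γ ū` has modulus at least `|1 - |γ|| · |u|`,
so the admissible top part satisfies `|g(u)| ≥ ε |u|^d` with `ε = |c| ∏ⱼ |1 - |γⱼ||^{νⱼ} > 0`.
A perturbation of order `|u|^{d-1}` cannot cancel this once `|u| > C / ε`.
-/

open ComplexConjugate

theorem norm_sub_norm_mul_le_norm_add_mul_conj (γ u : ℂ) :
    |1 - ‖γ‖| * ‖u‖ ≤ ‖u + γ * conj u‖ :=
  calc |1 - ‖γ‖| * ‖u‖ = |‖u‖ - ‖-(γ * conj u)‖| := by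
        rw [norm_neg, norm_mul, Complex.norm_conj, ← abs_of_nonneg (norm_nonneg u), ← abs_mul,
          abs_of_nonneg (norm_nonneg u)]
        ring_nf
    _ ≤ ‖u - -(γ * conj u)‖ := abs_norm_sub_norm_le _ _
    _ = ‖u + γ * conj u‖ := by rw [sub_neg_eq_add]

theorem norm_mul_pow_conj_pow_prod_ge {ι : Type*} [Fintype ι] (c : ℂ) (p q : ℕ) (γ : ι → ℂ)
    (ν : ι → ℕ) (u : ℂ) :
    ‖c‖ * (∏ j, |1 - ‖γ j‖| ^ ν j) * ‖u‖ ^ (p + q + ∑ j, ν j) ≤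
      ‖c * u ^ p * conj u ^ q * ∏ j, (u + γ j * conj u) ^ ν j‖ := by
  simp only [norm_mul, norm_pow, norm_prod, Complex.norm_conj]
  calc ‖c‖ * (∏ j, |1 - ‖γ j‖| ^ ν j) * ‖u‖ ^ (p + q + ∑ j, ν j)
      = ‖c‖ * ‖u‖ ^ p * ‖u‖ ^ q * ∏ j, (|1 - ‖γ j‖| * ‖u‖) ^ ν j := by
        simp only [mul_pow, Finset.prod_mul_distrib, Finset.prod_pow_eq_pow_sum, pow_add]
        ring
    _ ≤ ‖c‖ * ‖u‖ ^ p * ‖u‖ ^ q * ∏ j, ‖u + γ j * conj u‖ ^ ν j := by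
        gcongr with j
        exact norm_sub_norm_mul_le_norm_add_mul_conj (γ j) u

theorem exists_forall_le_norm_add_ne_zero_of_pow_bounds {E F : Type*} [NormedAddCommGroup E]
    [NormedAddCommGroup F] {g k : E → F} {ε C : ℝ} {d : ℕ} (hε : 0 < ε) (hd : 1 ≤ d)
    (hg : ∀ u, ε * ‖u‖ ^ d ≤ ‖g u‖) (hk : ∀ u, 1 ≤ ‖u‖ → ‖k u‖ ≤ C * ‖u‖ ^ (d - 1)) :
    ∃ R > 0, ∀ u, R ≤ ‖u‖ → g u + k u ≠ 0 := by
  refine ⟨max 1 (C / ε + 1), by positivity, fun u hu hzero => ?_⟩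
  have hu1 : 1 ≤ ‖u‖ := le_of_max_le_left hu
  have hCu : C < ε * ‖u‖ := by
    have := le_of_max_le_right hu
    rw [← div_lt_iff₀' hε]
    linarith
  have hgk : ‖g u‖ = ‖k u‖ := by rw [eq_neg_of_add_eq_zero_left hzero, norm_neg]
  have hpow : 0 < ‖u‖ ^ (d - 1) := by positivity
  have : ε * ‖u‖ * ‖u‖ ^ (d - 1) ≤ C * ‖u‖ ^ (d - 1) :=
    calc ε * ‖u‖ * ‖u‖ ^ (d - 1) = ε * ‖u‖ ^ d := by
          rw [mul_assoc, ← pow_succ', Nat.sub_add_cancel hd]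
      _ ≤ ‖k u‖ := hgk ▸ hg u
      _ ≤ C * ‖u‖ ^ (d - 1) := hk u hu1
  exact (le_of_mul_le_mul_right this hpow).not_gt hCu

theorem admissible_at_infinity_no_large_roots_general
    (c : ℂ) (hc : c ≠ 0) (p q s : ℕ) (γ : Fin s → ℂ) (ν : Fin s → ℕ)
    (hγ1 : ∀ j, ‖γ j‖ ≠ 1)
    (g : ℂ → ℂ)
    (hg : g = fun u => c * u ^ p * ((starRingEnd ℂ) u) ^ q *
      ∏ j, (u + γ j * (starRingEnd ℂ) u) ^ ν j)
    (d : ℕ) (hd : d = p + q + ∑ j, ν j) (hd1 : 1 ≤ d)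
    (k : ℂ → ℂ) (C : ℝ)
    (hk : ∀ u : ℂ, 1 ≤ ‖u‖ →
      ‖k u‖ ≤ C * ‖u‖ ^ (d - 1)) :
    ∃ R > 0, ∀ u : ℂ, R ≤ ‖u‖ → g u + k u ≠ 0 := by
  have hε : 0 < ‖c‖ * ∏ j, |1 - ‖γ j‖| ^ ν j := by
    refine mul_pos (norm_pos_iff.mpr hc) (Finset.prod_pos fun j _ => pow_pos ?_ _)
    exact abs_pos.mpr (sub_ne_zero.mpr (hγ1 j).symm)
  refine exists_forall_le_norm_add_ne_zero_of_pow_bounds hε hd1 (fun u => ?_) hk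
  rw [hg, hd]
  exact norm_mul_pow_conj_pow_prod_ge c p q γ ν u

/-- An admissible-at-infinity mixed polynomial has all its zeros in a bounded disk:
if `g(u) = c·u^p·ū^q·∏ⱼ(u + γⱼū)^{νⱼ}` with `c ≠ 0`, all `γⱼ ≠ 0`, `|γⱼ| ≠ 1`,
`d = p + q + Σⱼ νⱼ ≥ 1`, and `k : ℂ → ℂ` satisfies `|k(u)| ≤ C·|u|^{d−1}` for some
`C ≥ 0` and all `|u| ≥ 1`, then there is `R > 0` such that `g(u) + k(u) ≠ 0`
whenever `|u| ≥ R`. -/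
theorem admissible_at_infinity_no_large_roots
    (c : ℂ) (hc : c ≠ 0) (p q s : ℕ) (γ : Fin s → ℂ) (ν : Fin s → ℕ)
    (hγ0 : ∀ j, γ j ≠ 0) (hγ1 : ∀ j, ‖γ j‖ ≠ 1)
    (g : ℂ → ℂ)
    (hg : g = fun u => c * u ^ p * ((starRingEnd ℂ) u) ^ q *
      ∏ j, (u + γ j * (starRingEnd ℂ) u) ^ ν j)
    (d : ℕ) (hd : d = p + q + ∑ j, ν j) (hd1 : 1 ≤ d)
    (k : ℂ → ℂ) (C : ℝ) (hC : 0 ≤ C)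
    (hk : ∀ u : ℂ, 1 ≤ ‖u‖ →
      ‖k u‖ ≤ C * ‖u‖ ^ (d - 1)) :
    ∃ R > 0, ∀ u : ℂ, R ≤ ‖u‖ → g u + k u ≠ 0 :=
  admissible_at_infinity_no_large_roots_general c hc p q s γ ν hγ1 g hg d hd hd1 k C hk
end

section
/- Let c ∈ ℂ, c ≠ 0, a, b ∈ ℕ, and δ₁, …, δ_{s'} ∈ ℂ nonzero with |δⱼ| ≠ 1 and multiplicities μⱼ ∈ ℕ; define g(u) = c·u^a·ū^b·∏ⱼ(u + δⱼ·ū)^{μⱼ} and d = a + b + Σⱼ μⱼ. Let j : ℂ → ℂ be any function for which there exists C ≥ 0 with |j(u)| ≤ C·|u|^{d+1} for all u with |u| ≤ 1. Then there exists r > 0 such that g(u) + j(u) ≠ 0 whenever 0 < |u| ≤ r. (In particular, for a mixed polynomial f = f_{d̲} + j that is admissible at the origin, with f_{d̲} its lowest-degree radially homogeneous part and j the higher-degree terms, the origin is an isolated root of f.) -/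
/-!
On the circle `|u| = ρ` each factor satisfies `|u + δ ū| ≥ |1 - |δ|| ρ`, so the lowest-degree part
`g` is bounded below by `K ρ^d` with `K = |c| ∏ⱼ |1 - |δⱼ||^{μⱼ} > 0`, while the remainder `j` is
`O(ρ^{d+1})`; for small `ρ > 0` the remainder cannot cancel `g`.
-/

open ComplexConjugate

theorem exists_add_ne_zero_of_pow_le_norm_of_norm_le_pow_succ {E F : Type*}
    [NormedAddCommGroup E] [NormedAddCommGroup F] {f j : E → F} {K C : ℝ} {d : ℕ}
    (hK : 0 < K) (hf : ∀ u, K * ‖u‖ ^ d ≤ ‖f u‖)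
    (hj : ∀ u, ‖u‖ ≤ 1 → ‖j u‖ ≤ C * ‖u‖ ^ (d + 1)) :
    ∃ r > 0, ∀ u, u ≠ 0 → ‖u‖ ≤ r → f u + j u ≠ 0 := by
  refine ⟨min 1 (K / (|C| + 1)), by positivity, fun u hu hur hsum => ?_⟩
  have hu_pos : 0 < ‖u‖ := norm_pos_iff.mpr hu
  have hCu : C * ‖u‖ < K :=
    calc C * ‖u‖ ≤ |C| * (K / (|C| + 1)) :=
          mul_le_mul (le_abs_self C) (hur.trans (min_le_right _ _)) hu_pos.le (abs_nonneg C)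
      _ < K := by
          rw [← mul_div_assoc, div_lt_iff₀ (by positivity)]
          nlinarith [abs_nonneg C]
  refine lt_irrefl (K * ‖u‖ ^ d) ?_
  calc K * ‖u‖ ^ d ≤ ‖f u‖ := hf u
    _ = ‖j u‖ := by rw [eq_neg_of_add_eq_zero_left hsum, norm_neg]
    _ ≤ C * ‖u‖ ^ (d + 1) := hj u (hur.trans (min_le_left _ _))
    _ = C * ‖u‖ * ‖u‖ ^ d := by ring
    _ < K * ‖u‖ ^ d := by gcongr

theorem abs_one_sub_norm_mul_norm_le_norm_add_mul_conj (δ u : ℂ) :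
    |1 - ‖δ‖| * ‖u‖ ≤ ‖u + δ * conj u‖ :=
  calc |1 - ‖δ‖| * ‖u‖ = |‖u‖ - ‖δ * conj u‖| := by
        rw [norm_mul, Complex.norm_conj, ← one_sub_mul, abs_mul, abs_norm]
    _ ≤ ‖u + δ * conj u‖ := by simpa using abs_norm_sub_norm_le u (-(δ * conj u))

theorem prod_mul_pow_sum_le_norm_prod_add_mul_conj {ι : Type*} (s : Finset ι) (δ : ι → ℂ)
    (μ : ι → ℕ) (u : ℂ) :
    (∏ i ∈ s, |1 - ‖δ i‖| ^ μ i) * ‖u‖ ^ ∑ i ∈ s, μ i ≤ ‖∏ i ∈ s, (u + δ i * conj u) ^ μ i‖ := by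
  rw [← Finset.prod_pow_eq_pow_sum, ← Finset.prod_mul_distrib, norm_prod]
  refine Finset.prod_le_prod (fun i _ => by positivity) fun i _ => ?_
  rw [← mul_pow, norm_pow]
  exact pow_le_pow_left₀ (by positivity) (abs_one_sub_norm_mul_norm_le_norm_add_mul_conj _ _) _

theorem admissible_at_origin_isolated_root_general
    (c : ℂ) (hc : c ≠ 0) (a b s' : ℕ) (δ : Fin s' → ℂ) (μ : Fin s' → ℕ)
    (hδ1 : ∀ i, ‖δ i‖ ≠ 1)
    (g : ℂ → ℂ)
    (hg : g = fun u => c * u ^ a * ((starRingEnd ℂ) u) ^ b *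
      ∏ i, (u + δ i * (starRingEnd ℂ) u) ^ μ i)
    (d : ℕ) (hd : d = a + b + ∑ i, μ i)
    (j : ℂ → ℂ) (C : ℝ)
    (hj : ∀ u : ℂ, ‖u‖ ≤ 1 →
      ‖j u‖ ≤ C * ‖u‖ ^ (d + 1)) :
    ∃ r > 0, ∀ u : ℂ, u ≠ 0 → ‖u‖ ≤ r → g u + j u ≠ 0 := by
  have hK : 0 < ‖c‖ * ∏ i, |1 - ‖δ i‖| ^ μ i :=
    mul_pos (norm_pos_iff.mpr hc) <| Finset.prod_pos fun i _ =>
      pow_pos (abs_pos.mpr (sub_ne_zero.mpr (hδ1 i).symm)) _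
  refine exists_add_ne_zero_of_pow_le_norm_of_norm_le_pow_succ hK (fun u => ?_) hj
  have := prod_mul_pow_sum_le_norm_prod_add_mul_conj Finset.univ δ μ u
  rw [hg, hd]
  simp only [norm_mul, norm_pow, Complex.norm_conj, pow_add]
  calc ‖c‖ * (∏ i, |1 - ‖δ i‖| ^ μ i) * (‖u‖ ^ a * ‖u‖ ^ b * ‖u‖ ^ ∑ i, μ i)
      = ‖c‖ * ‖u‖ ^ a * ‖u‖ ^ b * ((∏ i, |1 - ‖δ i‖| ^ μ i) * ‖u‖ ^ ∑ i, μ i) := by ring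
    _ ≤ _ := by gcongr

/-- An admissible-at-the-origin mixed polynomial has the origin as an isolated root:
if `g(u) = c·u^a·ū^b·∏ⱼ(u + δⱼū)^{μⱼ}` with `c ≠ 0`, all `δⱼ ≠ 0`, `|δⱼ| ≠ 1`,
`d = a + b + Σⱼ μⱼ`, and `j : ℂ → ℂ` satisfies `|j(u)| ≤ C·|u|^{d+1}` for some
`C ≥ 0` and all `|u| ≤ 1`, then there is `r > 0` such that `g(u) + j(u) ≠ 0`
whenever `0 < |u| ≤ r`. -/
theorem admissible_at_origin_isolated_root
    (c : ℂ) (hc : c ≠ 0) (a b s' : ℕ) (δ : Fin s' → ℂ) (μ : Fin s' → ℕ)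
    (hδ0 : ∀ i, δ i ≠ 0) (hδ1 : ∀ i, ‖δ i‖ ≠ 1)
    (g : ℂ → ℂ)
    (hg : g = fun u => c * u ^ a * ((starRingEnd ℂ) u) ^ b *
      ∏ i, (u + δ i * (starRingEnd ℂ) u) ^ μ i)
    (d : ℕ) (hd : d = a + b + ∑ i, μ i)
    (j : ℂ → ℂ) (C : ℝ) (hC : 0 ≤ C)
    (hj : ∀ u : ℂ, ‖u‖ ≤ 1 →
      ‖j u‖ ≤ C * ‖u‖ ^ (d + 1)) :
    ∃ r > 0, ∀ u : ℂ, u ≠ 0 → ‖u‖ ≤ r → g u + j u ≠ 0 :=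
  admissible_at_origin_isolated_root_general c hc a b s' δ μ hδ1 g hg d hd j C hj
end
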